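/- Let K be a positive natural number, p : Fin K → ℝ a probability vector with p_k > 0 for all k and ∑_k p_k = 1, and a : Fin K → ℝ a prior with a_k > 0 for all k. For each natural number n define α_k(n) = a_k + n·p_k and S(n) = ∑_k α_k(n). Then the epistemic uncertainty converges to zero: lim_{n→∞} [ ∑_k negMulLog(α_k(n)/S(n)) − ∑_k (α_k(n)/S(n)) · (ψ(S(n)+1) − ψ(α_k(n)+1)) ] = 0. (Parametric Epistemic Convergence, epistemic part: as training samples in a leaf tend to infinity, parametric epistemic uncertainty converges to zero.) -/

import Mathlib

/-- The digamma function: the logarithmic derivative of the Gamma function. -/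
noncomputable def digamma (x : ℝ) : ℝ :=
  deriv (fun t => Real.log (Real.Gamma t)) x

/-!
Convexity of `log ∘ Γ` (Bohr–Mollerup) and `Γ (x + 1) = x Γ x` squeeze `ψ (x + 1)` between
`log x` and `log (x + 1)`, so `ψ (x + 1) - log x → 0` as `x → ∞`. Since `-log (α_k / S)` is
`log S - log α_k`, the epistemic uncertainty is the `α_k / S`-weighted average of the differences
`(ψ (α_k + 1) - log α_k) - (ψ (S + 1) - log S)`, and both `α_k` and `S ≥ α_k` tend to infinity.
-/

open Real Filter Topology

lemma differentiableAt_log_Gamma {x : ℝ} (hx : 0 < x) : DifferentiableAt ℝ (log ∘ Gamma) x :=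
  (differentiableAt_Gamma fun m =>
    (neg_nonpos.2 m.cast_nonneg |>.trans_lt hx).ne').log (Gamma_pos_of_pos hx).ne'

lemma slope_log_Gamma_add_one {x : ℝ} (hx : 0 < x) :
    slope (log ∘ Gamma) x (x + 1) = log x := by
  rw [slope_def_field, add_sub_cancel_left, div_one, Function.comp_apply, Function.comp_apply,
    Gamma_add_one hx.ne', log_mul hx.ne' (Gamma_pos_of_pos hx).ne', add_sub_cancel_right]

lemma log_le_digamma_add_one {x : ℝ} (hx : 0 < x) : log x ≤ digamma (x + 1) :=
  (slope_log_Gamma_add_one hx).symm.le.trans <|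
    convexOn_log_Gamma.slope_le_deriv hx (by positivity : 0 < x + 1) (lt_add_one x)
      (differentiableAt_log_Gamma (by positivity))

lemma digamma_add_one_le_log_add_one {x : ℝ} (hx : 0 < x) : digamma (x + 1) ≤ log (x + 1) :=
  (convexOn_log_Gamma.deriv_le_slope (by positivity : 0 < x + 1) (by positivity : 0 < x + 1 + 1)
    (lt_add_one _) (differentiableAt_log_Gamma (by positivity))).trans
      (slope_log_Gamma_add_one (by positivity)).le

lemma tendsto_digamma_add_one_sub_log :
    Tendsto (fun x => digamma (x + 1) - log x) atTop (𝓝 0) := by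
  refine tendsto_of_tendsto_of_tendsto_of_le_of_le' tendsto_const_nhds
    (tendsto_log_comp_add_sub_log 1) ?_ ?_
  all_goals
    filter_upwards [eventually_gt_atTop 0] with x hx
  · exact sub_nonneg.2 (log_le_digamma_add_one hx)
  · exact sub_le_sub_right (digamma_add_one_le_log_add_one hx) _

/-- `H_total - H_aleatoric` for the Dirichlet distribution with parameters `α`. -/
noncomputable def epistemicUncertainty {ι : Type*} [Fintype ι] (α : ι → ℝ) : ℝ :=
  (∑ k, negMulLog (α k / ∑ j, α j)) -
    ∑ k, (α k / ∑ j, α j) * (digamma ((∑ j, α j) + 1) - digamma (α k + 1))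

lemma epistemicUncertainty_eq_sum {ι : Type*} [Fintype ι] {α : ι → ℝ} (hα : ∀ k, 0 < α k) :
    epistemicUncertainty α = ∑ k, (α k / ∑ j, α j) *
      ((digamma (α k + 1) - log (α k)) - (digamma ((∑ j, α j) + 1) - log (∑ j, α j))) := by
  rw [epistemicUncertainty, ← Finset.sum_sub_distrib]
  refine Finset.sum_congr rfl fun k _ => ?_
  have hS : 0 < ∑ j, α j :=
    (hα k).trans_le (Finset.single_le_sum (fun j _ => (hα j).le) (Finset.mem_univ k))
  rw [negMulLog, log_div (hα k).ne' hS.ne']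
  ring

theorem tendsto_epistemicUncertainty_zero {ι β : Type*} [Fintype ι] {l : Filter β}
    {α : β → ι → ℝ} (hα : ∀ x k, 0 < α x k) (hα_top : ∀ k, Tendsto (fun x => α x k) l atTop) :
    Tendsto (fun x => epistemicUncertainty (α x)) l (𝓝 0) := by
  simp_rw [epistemicUncertainty_eq_sum (hα _)]
  rw [← Finset.sum_const_zero (s := Finset.univ (α := ι))]
  refine tendsto_finsetSum _ fun k _ => ?_
  have hle : ∀ x, α x k ≤ ∑ j, α x j := fun x =>
    Finset.single_le_sum (fun j _ => (hα x j).le) (Finset.mem_univ k)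
  have hS_top : Tendsto (fun x => ∑ j, α x j) l atTop := tendsto_atTop_mono hle (hα_top k)
  have hweight : IsBoundedUnder (· ≤ ·) l (norm ∘ fun x => α x k / ∑ j, α x j) := by
    refine isBoundedUnder_of ⟨1, fun x => ?_⟩
    rw [Function.comp_apply, norm_div, Real.norm_of_nonneg (hα x k).le,
      Real.norm_of_nonneg ((hα x k).le.trans (hle x))]
    exact div_le_one_of_le₀ (hle x) ((hα x k).le.trans (hle x))
  refine isBoundedUnder_le_mul_tendsto_zero hweight ?_
  simpa using ((tendsto_digamma_add_one_sub_log.comp (hα_top k)).sub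
      (tendsto_digamma_add_one_sub_log.comp hS_top))

theorem epistemic_tendsto_zero_general (K : ℕ)
    (p : Fin K → ℝ) (hp : ∀ k, 0 < p k)
    (a : Fin K → ℝ) (ha : ∀ k, 0 < a k) :
    Filter.Tendsto
      (fun n : ℕ =>
        (∑ k, Real.negMulLog ((a k + n * p k) / ∑ j, (a j + n * p j))) -
          ∑ k, ((a k + n * p k) / ∑ j, (a j + n * p j)) *
            (digamma ((∑ j, (a j + n * p j)) + 1) - digamma ((a k + n * p k) + 1)))
      Filter.atTop (nhds 0) :=
  tendsto_epistemicUncertainty_zero (α := fun (n : ℕ) k => a k + n * p k)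
    (fun n k => add_pos_of_pos_of_nonneg (ha k) (mul_nonneg n.cast_nonneg (hp k).le))
    fun k => tendsto_atTop_add_const_left _ _
      ((tendsto_natCast_atTop_atTop (R := ℝ)).atTop_mul_const (hp k))

/-- **Parametric Epistemic Convergence (epistemic part).** For Dirichlet posterior
parameters `α k (n) = a k + n * p k` with positive prior `a` and true data distribution
`p` (a positive probability vector), the epistemic uncertainty
`H_epistemic = H_total − H_aleatoric
  = ∑ k, negMulLog (α k / S) − ∑ k, (α k / S)(ψ(S+1) − ψ(α k + 1))`
converges to zero as the number of training samples `n → ∞`. -/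
theorem epistemic_tendsto_zero (K : ℕ) (hK : 0 < K)
    (p : Fin K → ℝ) (hp : ∀ k, 0 < p k) (hpsum : ∑ k, p k = 1)
    (a : Fin K → ℝ) (ha : ∀ k, 0 < a k) :
    Filter.Tendsto
      (fun n : ℕ =>
        (∑ k, Real.negMulLog ((a k + n * p k) / ∑ j, (a j + n * p j))) -
          ∑ k, ((a k + n * p k) / ∑ j, (a j + n * p j)) *
            (digamma ((∑ j, (a j + n * p j)) + 1) - digamma ((a k + n * p k) + 1)))
      Filter.atTop (nhds 0) :=
  epistemic_tendsto_zero_general K p hp a ha
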